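/- arXiv:1508.00209 — 2 statements merged into one kernel-verified Lean document; each statement's English description precedes it below -/
import Mathlib

section
/- Let k be a field and let a ≥ r ≥ 1. There exists a linear subspace M of the a × a matrices over k of dimension a - r + 1 such that every nonzero element of M has rank exactly r. In particular l(r;a) ≥ a - r + 1. -/
/-!
Take the matrix whose `i`-th row, for `i < r`, is the coefficient vector of `X ^ i * p`, with `p`
ranging over the polynomials of degree `≤ a - r`, and whose other rows vanish. It has at most `r`
nonzero rows. If `p ≠ 0` has trailing degree `m`, the `r × r` minor on the first `r` rows and the
columns `m, …, m + r - 1` is upper triangular with the trailing coefficient of `p` on its diagonal,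
so the rank is exactly `r`, which also makes the matrix depend injectively on `p`.
-/

open Polynomial Matrix

section ShiftedRows

variable {R : Type*} [CommSemiring R]

noncomputable def shiftedRows (a r : ℕ) (p : R[X]) : Matrix (Fin a) (Fin a) R :=
  of fun i j => if (i : ℕ) < r then (X ^ (i : ℕ) * p).coeff j else 0

variable (R) in
noncomputable def shiftedRowsLinearMap (a r : ℕ) : R[X] →ₗ[R] Matrix (Fin a) (Fin a) R where
  toFun := shiftedRows a r
  map_add' p q := by ext i j; by_cases hi : (i : ℕ) < r <;> simp [shiftedRows, hi, mul_add]
  map_smul' c p := by ext i j; by_cases hi : (i : ℕ) < r <;> simp [shiftedRows, hi]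

theorem rank_shiftedRows_le [StrongRankCondition R] (a r : ℕ) (p : R[X]) :
    (shiftedRows a r p).rank ≤ r := by
  refine ((shiftedRows a r p).rank_le_card_of_support_subset {i | (i : ℕ) < r} ?_).trans ?_
  · intro i hi
    by_contra hir
    exact hi (funext fun j => by simp_all [shiftedRows])
  · rw [Fin.card_filter_val_lt]
    exact min_le_right a r

end ShiftedRows

theorem le_rank_shiftedRows {K : Type*} [Field K] {a r : ℕ} {p : K[X]} (hp : p ≠ 0)
    (hdeg : p.natDegree + r ≤ a) : r ≤ (shiftedRows a r p).rank := by
  set m := p.natTrailingDegree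
  have hm : m + r ≤ a := by have := p.natTrailingDegree_le_natDegree; omega
  set S := (shiftedRows a r p).submatrix (Fin.castLE (show r ≤ a by omega))
    (fun j : Fin r => ⟨m + j, by omega⟩)
  have hS : S.IsUpperTriangular := by
    intro i j hji
    simp only [S, submatrix_apply, shiftedRows, of_apply, Fin.val_castLE, i.2, if_true,
      coeff_X_pow_mul']
    split_ifs with h
    · exact coeff_eq_zero_of_lt_natTrailingDegree (by simp at hji; omega)
    · rfl
  have hdiag (i : Fin r) : S i i = p.trailingCoeff := by
    simp only [S, submatrix_apply, shiftedRows, of_apply, Fin.val_castLE, i.2, if_true,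
      coeff_X_pow_mul', Nat.le_add_left, add_tsub_cancel_right]
    rfl
  have hunit : IsUnit S := by
    rw [isUnit_iff_isUnit_det, det_of_isUpperTriangular hS, Finset.prod_congr rfl fun i _ => hdiag i,
      Finset.prod_const]
    exact (trailingCoeff_nonzero_iff_nonzero.2 hp).isUnit.pow _
  calc r = S.rank := by rw [rank_of_isUnit S hunit, Fintype.card_fin]
    _ ≤ _ := rank_submatrix_le _ _ _

theorem rank_shiftedRows {K : Type*} [Field K] {a r : ℕ} {p : K[X]} (hp : p ≠ 0)
    (hdeg : p.natDegree + r ≤ a) : (shiftedRows a r p).rank = r :=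
  (rank_shiftedRows_le a r p).antisymm (le_rank_shiftedRows hp hdeg)

/-- For a ≥ r ≥ 1 there exists a subspace of a×a matrices of dimension a-r+1
in which every nonzero element has rank exactly r; hence l(r;a) ≥ a-r+1. -/
theorem exists_constant_rank_subspace (k : Type*) [Field k] (a r : ℕ)
    (hr : 1 ≤ r) (hra : r ≤ a) :
    ∃ M : Submodule k (Matrix (Fin a) (Fin a) k),
      Module.finrank k M = a - r + 1 ∧
      ∀ f ∈ M, f ≠ 0 → f.rank = r := by
  set P := degreeLT k (a - r + 1)
  have hrank (p : P) (hp : p ≠ 0) : (shiftedRows a r (p : k[X])).rank = r := by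
    have hp' : (p : k[X]) ≠ 0 := by simpa using hp
    have hdeg : (p : k[X]).natDegree < a - r + 1 :=
      (natDegree_lt_iff_degree_lt hp').2 (mem_degreeLT.1 p.2)
    exact rank_shiftedRows hp' (by omega)
  have hinj : Function.Injective ((shiftedRowsLinearMap k a r).comp P.subtype) := by
    rw [← LinearMap.ker_eq_bot, LinearMap.ker_eq_bot']
    intro p hp
    by_contra hp0
    have h := hrank p hp0
    rw [show shiftedRows a r (p : k[X]) = 0 from hp, rank_zero] at h
    omega
  refine ⟨LinearMap.range ((shiftedRowsLinearMap k a r).comp P.subtype), ?_, ?_⟩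
  · rw [LinearMap.finrank_range_of_inj hinj, Module.finrank_eq_card_basis (degreeLT.basis k _),
      Fintype.card_fin]
  · rintro _ ⟨p, rfl⟩ hf
    exact hrank p (by rintro rfl; exact hf (map_zero _))
end

section
/- For every nonzero (x0, x1, x2) in k³ (k a field of characteristic zero), the 5×5 matrix Ψ with rows (0, -x2, 0, -x0, 0), (x2, 0, 0, -x1, -x0), (0, 0, 0, -x2, -x1), (x0, x1, x2, 0, 0), (0, x0, x1, 0, 0) has rank exactly 4. -/
/-!
Ψ is skew-symmetric, so the signed Pfaffians `v i = (-1)^i Pf(Ψ with row and column i removed)`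
form a vector in its kernel, while the principal 4×4 minors of Ψ are their squares `v i ^ 2`.
Here `v = (x0 x2 - x1², x0 x1, -x0², -x1 x2, x2²)`, which vanishes only at `x = 0`: so for `x ≠ 0`
the kernel is nontrivial and some 4×4 minor is nonzero.
-/

open Matrix

namespace Matrix

variable {m n ι K : Type*} [Field K] [Fintype n]

theorem rank_lt_card_width_of_mulVec_eq_zero (A : Matrix m n K) {v : n → K} (hv : v ≠ 0)
    (hAv : A *ᵥ v = 0) : A.rank < Fintype.card n := by
  have hker : 0 < Module.finrank K (LinearMap.ker A.mulVecLin) :=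
    Module.finrank_pos_iff_exists_ne_zero.mpr ⟨⟨v, hAv⟩, by simpa [Subtype.ext_iff] using hv⟩
  have hrank_nullity := LinearMap.finrank_range_add_finrank_ker A.mulVecLin
  rw [Module.finrank_fintype_fun_eq_card] at hrank_nullity
  exact Nat.lt_of_lt_of_eq (Nat.lt_add_of_pos_right hker) hrank_nullity

theorem card_le_rank_of_det_submatrix_ne_zero [Fintype ι] [DecidableEq ι] (A : Matrix m n K)
    (r : ι → m) (c : ι → n) (h : (A.submatrix r c).det ≠ 0) : Fintype.card ι ≤ A.rank :=
  (rank_of_det_ne_zero h).symm.le.trans (rank_submatrix_le A r c)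

end Matrix

section Sylvester

variable {K : Type*} [Field K]

def sylvesterMatrix (x0 x1 x2 : K) : Matrix (Fin 5) (Fin 5) K :=
  !![0, -x2, 0, -x0, 0;
     x2, 0, 0, -x1, -x0;
     0, 0, 0, -x2, -x1;
     x0, x1, x2, 0, 0;
     0, x0, x1, 0, 0]

def sylvesterPfaffianVector (x0 x1 x2 : K) : Fin 5 → K :=
  ![x0 * x2 - x1 ^ 2, x0 * x1, -x0 ^ 2, -x1 * x2, x2 ^ 2]

theorem sylvesterMatrix_mulVec_pfaffianVector (x0 x1 x2 : K) :
    sylvesterMatrix x0 x1 x2 *ᵥ sylvesterPfaffianVector x0 x1 x2 = 0 := by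
  ext i
  fin_cases i <;>
    simp [sylvesterMatrix, sylvesterPfaffianVector, mulVec, dotProduct, Fin.sum_univ_five] <;>
    ring

theorem det_sylvesterMatrix_submatrix_succAbove (x0 x1 x2 : K) (i : Fin 5) :
    ((sylvesterMatrix x0 x1 x2).submatrix i.succAbove i.succAbove).det =
      sylvesterPfaffianVector x0 x1 x2 i ^ 2 := by
  fin_cases i <;>
    simp [sylvesterMatrix, sylvesterPfaffianVector, det_succ_row_zero, Fin.sum_univ_succ,
      Fin.succAbove] <;>
    ring

theorem sylvesterPfaffianVector_ne_zero {x0 x1 x2 : K} (hx : ¬(x0 = 0 ∧ x1 = 0 ∧ x2 = 0)) :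
    sylvesterPfaffianVector x0 x1 x2 ≠ 0 := by
  intro hv
  have h0 : x0 = 0 := by simpa [sylvesterPfaffianVector] using congrFun hv 2
  have h2 : x2 = 0 := by simpa [sylvesterPfaffianVector] using congrFun hv 4
  have h1 : x1 = 0 := by simpa [sylvesterPfaffianVector, h0] using congrFun hv 0
  exact hx ⟨h0, h1, h2⟩

end Sylvester

theorem sylvester_matrix_rank_four_general (k : Type*) [Field k]
    (x0 x1 x2 : k) (hx : ¬(x0 = 0 ∧ x1 = 0 ∧ x2 = 0)) :
    (Matrix.of ![![0, -x2, 0, -x0, 0],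
                 ![x2, 0, 0, -x1, -x0],
                 ![0, 0, 0, -x2, -x1],
                 ![x0, x1, x2, 0, 0],
                 ![0, x0, x1, 0, 0]] : Matrix (Fin 5) (Fin 5) k).rank = 4 := by
  change (sylvesterMatrix x0 x1 x2).rank = 4
  have hv := sylvesterPfaffianVector_ne_zero hx
  have hle : (sylvesterMatrix x0 x1 x2).rank < 5 :=
    rank_lt_card_width_of_mulVec_eq_zero _ hv (sylvesterMatrix_mulVec_pfaffianVector x0 x1 x2)
  obtain ⟨i, hi⟩ := Function.ne_iff.mp hv
  have hge : 4 ≤ (sylvesterMatrix x0 x1 x2).rank := by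
    simpa using card_le_rank_of_det_submatrix_ne_zero _ i.succAbove i.succAbove
      (by rw [det_sylvesterMatrix_submatrix_succAbove]; exact pow_ne_zero 2 hi)
  omega

/-- Sylvester's 5×5 matrix has rank exactly 4 for every nonzero (x0,x1,x2). -/
theorem sylvester_matrix_rank_four (k : Type*) [Field k] [CharZero k]
    (x0 x1 x2 : k) (hx : ¬(x0 = 0 ∧ x1 = 0 ∧ x2 = 0)) :
    (Matrix.of ![![0, -x2, 0, -x0, 0],
                 ![x2, 0, 0, -x1, -x0],
                 ![0, 0, 0, -x2, -x1],
                 ![x0, x1, x2, 0, 0],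
                 ![0, x0, x1, 0, 0]] : Matrix (Fin 5) (Fin 5) k).rank = 4 :=
  sylvester_matrix_rank_four_general k x0 x1 x2 hx
end
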